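/- Let U be a metric space and for each j ∈ {1,2} let M_j be a Markov kernel on U satisfying: for all bounded measurable Lipschitz φ, |M_j(φ)(u) - M_j(φ)(u')| ≤ C‖φ‖·|u - u'|. Let G: U → R satisfy c^{-1} < G < c and be globally Lipschitz. Let u_1^i, u_2^i (i = 1,...,N) be points of U, let η_j^N = (1/N)Σ_i δ_{u_j^i}, and define Φ_j(η_j^N)(φ) = η_j^N(G M_j(φ))/η_j^N(G). Then there exists C(φ) depending only on c, the Lipschitz constants, and ‖φ‖, such that |Φ_1(η_1^N)(φ) - Φ_2(η_2^N)(φ)| ≤ C(φ) ( (1/N)Σ_{i=1}^N min(|u_1^i - u_2^i|, 1) + |||M_1 - M_2||| ), where |||M_1 - M_2||| = sup over bounded-by-1 Lipschitz ψ and x of |M_1(ψ)(x) - M_2(ψ)(x)|. -/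

import Mathlib

/-!
Write `Φⱼ(ηⱼᴺ)(φ) = Aⱼ / Sⱼ` with `Aⱼ = Σᵢ G(uⱼⁱ) Mⱼ(φ)(uⱼⁱ)` and `Sⱼ = Σᵢ G(uⱼⁱ)`. Both
denominators are at least `N / c`, so the difference of the ratios is controlled by `|A₁ - A₂|`
and `|S₁ - S₂|`. Each summand of `A₁ - A₂` splits as the increment of the bounded Lipschitz
function `G · M₁(φ)` between `u₁ⁱ` and `u₂ⁱ`, which is `O(min(|u₁ⁱ - u₂ⁱ|, 1))`, plus
`G(u₂ⁱ) (M₁ - M₂)(φ)(u₂ⁱ)`, which is at most `c ‖φ‖ |||M₁ - M₂|||` after rescaling `φ` to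
sup norm `1`; the summands of `S₁ - S₂` are handled like the first part.
-/

open MeasureTheory Finset

lemma abs_div_sub_div_le {A₁ A₂ S₁ S₂ s a : ℝ} (hs : 0 < s) (hS₁ : s ≤ S₁) (hS₂ : s ≤ S₂)
    (hA₂ : |A₂| ≤ a) :
    |A₁ / S₁ - A₂ / S₂| ≤ |A₁ - A₂| / s + a * |S₁ - S₂| / s ^ 2 := by
  have hS₁0 : 0 < S₁ := hs.trans_le hS₁
  have hS₂0 : 0 < S₂ := hs.trans_le hS₂
  have hsplit : A₁ / S₁ - A₂ / S₂ = (A₁ - A₂) / S₁ + A₂ * (S₂ - S₁) / (S₁ * S₂) := by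
    field_simp; ring
  calc |A₁ / S₁ - A₂ / S₂|
      ≤ |A₁ - A₂| / S₁ + |A₂| * |S₁ - S₂| / (S₁ * S₂) := by
        rw [hsplit, abs_sub_comm S₁]
        refine (abs_add_le _ _).trans_eq ?_
        rw [abs_div, abs_div, abs_mul, abs_of_pos hS₁0, abs_of_pos (mul_pos hS₁0 hS₂0)]
    _ ≤ |A₁ - A₂| / s + a * |S₁ - S₂| / s ^ 2 := by
        have ha : 0 ≤ a := (abs_nonneg _).trans hA₂
        gcongr
        rw [sq]; exact mul_le_mul hS₁ hS₂ hs.le hS₁0.le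

lemma abs_le_mul_min_one {δ d L B : ℝ} (hd : 0 ≤ d) (hL : 0 ≤ L) (hδL : |δ| ≤ L * d)
    (hδB : |δ| ≤ B) : |δ| ≤ (L + B) * min d 1 := by
  have hB : 0 ≤ B := (abs_nonneg δ).trans hδB
  rcases le_total d 1 with h | h
  · rw [min_eq_left h]; nlinarith
  · rw [min_eq_right h]; nlinarith

lemma abs_sub_le_mul_min_dist_one {U : Type*} [PseudoMetricSpace U] {f : U → ℝ} {L B : ℝ}
    (hL : 0 ≤ L) (hf : ∀ x y, |f x - f y| ≤ L * dist x y) (hB : ∀ x, |f x| ≤ B) (x y : U) :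
    |f x - f y| ≤ (L + 2 * B) * min (dist x y) 1 :=
  abs_le_mul_min_one dist_nonneg hL (hf x y)
    ((abs_sub _ _).trans (by linarith [hB x, hB y]))

lemma abs_mul_sub_mul_le {U : Type*} [PseudoMetricSpace U] {G I : U → ℝ} {c b LG LI : ℝ}
    (hc : 0 ≤ c) (hG : ∀ x, |G x| ≤ c) (hI : ∀ x, |I x| ≤ b)
    (hGlip : ∀ x y, |G x - G y| ≤ LG * dist x y) (hIlip : ∀ x y, |I x - I y| ≤ LI * dist x y)
    (x y : U) : |G x * I x - G y * I y| ≤ (LG * b + c * LI) * dist x y := by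
  have hb : 0 ≤ b := (abs_nonneg _).trans (hI x)
  calc |G x * I x - G y * I y| = |(G x - G y) * I x + G y * (I x - I y)| := by
        congr 1; ring
    _ ≤ |G x - G y| * |I x| + |G y| * |I x - I y| := by
        rw [← abs_mul, ← abs_mul]; exact abs_add_le _ _
    _ ≤ LG * dist x y * b + c * (LI * dist x y) :=
        add_le_add
          (mul_le_mul (hGlip x y) (hI x) (abs_nonneg _) ((abs_nonneg _).trans (hGlip x y)))
          (mul_le_mul (hG y) (hIlip x y) (abs_nonneg _) hc)
    _ = (LG * b + c * LI) * dist x y := by ring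

lemma abs_sum_sub_sum_le {ι : Type*} (s : Finset ι) {f g m : ι → ℝ} {K e : ℝ}
    (h : ∀ i ∈ s, |f i - g i| ≤ K * m i + e) :
    |∑ i ∈ s, f i - ∑ i ∈ s, g i| ≤ K * ∑ i ∈ s, m i + #s * e :=
  calc |∑ i ∈ s, f i - ∑ i ∈ s, g i| ≤ ∑ i ∈ s, |f i - g i| := by
        rw [← sum_sub_distrib]; exact abs_sum_le_sum_abs _ _
    _ ≤ ∑ i ∈ s, (K * m i + e) := sum_le_sum h
    _ = K * ∑ i ∈ s, m i + #s * e := by rw [sum_add_distrib, mul_sum, sum_const, nsmul_eq_mul]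

theorem abs_weightedMean_sub_le {U ι : Type*} [PseudoMetricSpace U] [Fintype ι] [Nonempty ι]
    {G I₁ I₂ : U → ℝ} {c b LG LI e : ℝ} (hc : 0 < c) (hG : ∀ x, c⁻¹ ≤ G x ∧ G x ≤ c)
    (hLG : 0 ≤ LG) (hGlip : ∀ x y, |G x - G y| ≤ LG * dist x y)
    (hI₁ : ∀ x, |I₁ x| ≤ b) (hI₂ : ∀ x, |I₂ x| ≤ b)
    (hLI : 0 ≤ LI) (hI₁lip : ∀ x y, |I₁ x - I₁ y| ≤ LI * dist x y)
    (hI : ∀ x, |I₁ x - I₂ x| ≤ e) (u₁ u₂ : ι → U) :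
    |(∑ i, G (u₁ i) * I₁ (u₁ i)) / (∑ i, G (u₁ i))
        - (∑ i, G (u₂ i) * I₂ (u₂ i)) / (∑ i, G (u₂ i))|
      ≤ (c * (LG * b + c * LI + 2 * (c * b)) + c ^ 3 * b * (LG + 2 * c)) *
          ((Fintype.card ι : ℝ)⁻¹ * ∑ i, min (dist (u₁ i) (u₂ i)) 1) + c ^ 2 * e := by
  set n : ℝ := (Fintype.card ι : ℝ)
  have hn : 0 < n := Nat.cast_pos.mpr Fintype.card_pos
  have hGabs (x : U) : |G x| ≤ c := abs_le.mpr ⟨by linarith [hG x, inv_pos.mpr hc], (hG x).2⟩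
  have hGmul (x : U) {y B : ℝ} (hy : |y| ≤ B) : |G x * y| ≤ c * B := by
    rw [abs_mul]; exact mul_le_mul (hGabs x) hy (abs_nonneg _) hc.le
  have hb : 0 ≤ b := (abs_nonneg _).trans (hI₁ (u₁ (Classical.arbitrary ι)))
  have hden (u : ι → U) : n * c⁻¹ ≤ ∑ i, G (u i) := by
    simpa [n] using card_nsmul_le_sum univ (fun i => G (u i)) c⁻¹ fun i _ => (hG (u i)).1
  have hnum : |∑ i, G (u₂ i) * I₂ (u₂ i)| ≤ n * (c * b) := by
    refine (abs_sum_le_sum_abs _ _).trans ?_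
    simpa [n] using sum_le_card_nsmul univ _ (c * b) fun i _ => hGmul _ (hI₂ _)
  have hnum_sub : |∑ i, G (u₁ i) * I₁ (u₁ i) - ∑ i, G (u₂ i) * I₂ (u₂ i)|
      ≤ (LG * b + c * LI + 2 * (c * b)) * ∑ i, min (dist (u₁ i) (u₂ i)) 1 + n * (c * e) := by
    refine abs_sum_sub_sum_le univ fun i _ => ?_
    have hsplit : G (u₁ i) * I₁ (u₁ i) - G (u₂ i) * I₂ (u₂ i)
        = (G (u₁ i) * I₁ (u₁ i) - G (u₂ i) * I₁ (u₂ i)) + G (u₂ i) * (I₁ (u₂ i) - I₂ (u₂ i)) := by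
      ring
    rw [hsplit]
    refine (abs_add_le _ _).trans (add_le_add ?_ ?_)
    · exact abs_sub_le_mul_min_dist_one (f := fun x => G x * I₁ x) (by positivity)
        (abs_mul_sub_mul_le hc.le hGabs hI₁ hGlip hI₁lip) (fun x => hGmul x (hI₁ x)) _ _
    · exact hGmul _ (hI _)
  have hden_sub : |∑ i, G (u₁ i) - ∑ i, G (u₂ i)|
      ≤ (LG + 2 * c) * ∑ i, min (dist (u₁ i) (u₂ i)) 1 := by
    simpa using abs_sum_sub_sum_le univ (e := 0) fun i _ => by
      simpa using abs_sub_le_mul_min_dist_one hLG hGlip hGabs (u₁ i) (u₂ i)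
  calc _ ≤ _ := abs_div_sub_div_le (by positivity) (hden u₁) (hden u₂) hnum
    _ ≤ ((LG * b + c * LI + 2 * (c * b)) * ∑ i, min (dist (u₁ i) (u₂ i)) 1 + n * (c * e))
          / (n * c⁻¹)
        + n * (c * b) * ((LG + 2 * c) * ∑ i, min (dist (u₁ i) (u₂ i)) 1) / (n * c⁻¹) ^ 2 := by gcongr
    _ = _ := by field_simp; ring

lemma abs_integral_le_of_abs_le {α : Type*} [MeasurableSpace α] {μ : Measure α}
    [IsProbabilityMeasure μ] {f : α → ℝ} {b : ℝ} (hf : ∀ x, |f x| ≤ b) :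
    |∫ x, f x ∂μ| ≤ b := by
  simpa using norm_integral_le_of_norm_le_const (μ := μ) (f := f) (.of_forall hf)

lemma abs_integral_sub_le_mul_of_unit_bound {α : Type*} [PseudoMetricSpace α] [MeasurableSpace α]
    {μ ν : Measure α} {D : ℝ}
    (hD : ∀ ψ : α → ℝ, Measurable ψ → (∀ x, |ψ x| ≤ 1) → (∃ K, LipschitzWith K ψ) →
      |∫ y, ψ y ∂μ - ∫ y, ψ y ∂ν| ≤ D)
    {φ : α → ℝ} (hφm : Measurable φ) (hφlip : ∃ K, LipschitzWith K φ) {b : ℝ} (hb : 0 < b)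
    (hφb : ∀ x, |φ x| ≤ b) :
    |∫ y, φ y ∂μ - ∫ y, φ y ∂ν| ≤ b * D := by
  obtain ⟨K, hK⟩ := hφlip
  have hscaled_bound (x : α) : |b⁻¹ * φ x| ≤ 1 := by
    rw [abs_mul, abs_inv, abs_of_pos hb]; exact inv_mul_le_one_of_le₀ (hφb x) hb.le
  have hscaled := hD (fun y => b⁻¹ * φ y) (hφm.const_mul b⁻¹) hscaled_bound
    ⟨_, (lipschitzWith_smul b⁻¹).comp hK⟩
  rwa [integral_const_mul, integral_const_mul, ← mul_sub, abs_mul, abs_inv, abs_of_pos hb,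
    inv_mul_le_iff₀ hb] at hscaled

/-- Deterministic stability estimate for the one-step Bayes update difference between the
two levels of a coupled particle system: with a bounded (`c⁻¹ < G < c`) Lipschitz potential
`G`, Markov kernels `M₁, M₂` satisfying a Lipschitz mixing property, `D` an upper bound for
`|||M₁ - M₂|||` (sup over bounded-by-1 Lipschitz test functions and initial points), and
`φ` bounded measurable Lipschitz, there is `C(φ)` such that for all `N` and particle clouds
`u₁, u₂`,
`|Φ₁(η₁^N)(φ) - Φ₂(η₂^N)(φ)| ≤ C(φ)((1/N)Σᵢ min(dist(u₁ⁱ,u₂ⁱ),1) + D)`. -/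
theorem stmt9 (U : Type*) [MetricSpace U] [MeasurableSpace U]
    (M₁ M₂ : U → Measure U)
    (hM : ∀ u, IsProbabilityMeasure (M₁ u) ∧ IsProbabilityMeasure (M₂ u))
    (c C₀ CG : ℝ) (hc : 1 < c) (hC₀ : 0 ≤ C₀) (hCG : 0 ≤ CG)
    (G : U → ℝ) (hG : ∀ x, c⁻¹ < G x ∧ G x < c)
    (hGlip : ∀ x x', |G x - G x'| ≤ CG * dist x x')
    (hMlip : ∀ (M : U → Measure U), (M = M₁ ∨ M = M₂) →
      ∀ (ψ : U → ℝ) (b : ℝ), Measurable ψ → (∀ x, |ψ x| ≤ b) →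
        (∃ K, LipschitzWith K ψ) →
        ∀ u u', |(∫ x, ψ x ∂(M u)) - ∫ x, ψ x ∂(M u')| ≤ C₀ * b * dist u u')
    (D : ℝ)
    (hD : ∀ (ψ : U → ℝ), Measurable ψ → (∀ x, |ψ x| ≤ 1) → (∃ K, LipschitzWith K ψ) →
      ∀ x, |(∫ y, ψ y ∂(M₁ x)) - ∫ y, ψ y ∂(M₂ x)| ≤ D)
    (φ : U → ℝ) (hφm : Measurable φ) (bφ : ℝ) (hbφ : ∀ x, |φ x| ≤ bφ)
    (hφlip : ∃ K, LipschitzWith K φ) :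
    ∃ Cφ > 0, ∀ (N : ℕ), 0 < N → ∀ (u₁ u₂ : Fin N → U),
      |(∑ i, G (u₁ i) * ∫ x, φ x ∂(M₁ (u₁ i))) / (∑ i, G (u₁ i))
          - (∑ i, G (u₂ i) * ∫ x, φ x ∂(M₂ (u₂ i))) / (∑ i, G (u₂ i))|
        ≤ Cφ * ((N : ℝ)⁻¹ * ∑ i, min (dist (u₁ i) (u₂ i)) 1 + D) := by
  -- `bφ` may be `0`, while rescaling `φ` to sup norm `1` needs a positive bound
  set b := max bφ 1
  have hb : 0 < b := zero_lt_one.trans_le (le_max_right _ _)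
  have hφb (x : U) : |φ x| ≤ b := (hbφ x).trans (le_max_left _ _)
  have hc₀ : 0 < c := one_pos.trans hc
  set K := c * (CG * b + c * (C₀ * b) + 2 * (c * b)) + c ^ 3 * b * (CG + 2 * c)
  refine ⟨K + c ^ 2 * b, by positivity, fun N hN u₁ u₂ => ?_⟩
  have : Nonempty (Fin N) := ⟨⟨0, hN⟩⟩
  have hD₀ : 0 ≤ D := by
    simpa using hD 0 measurable_const (by simp) ⟨0, LipschitzWith.const 0⟩ (u₁ ⟨0, hN⟩)
  have hmean := abs_weightedMean_sub_le hc₀ (fun x => ⟨(hG x).1.le, (hG x).2.le⟩) hCG hGlip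
    (fun x => haveI := (hM x).1; abs_integral_le_of_abs_le hφb)
    (fun x => haveI := (hM x).2; abs_integral_le_of_abs_le hφb) (by positivity)
    (hMlip M₁ (Or.inl rfl) φ b hφm hφb hφlip)
    (fun x => abs_integral_sub_le_mul_of_unit_bound (fun ψ hψm hψ hψlip => hD ψ hψm hψ hψlip x)
      hφm hφlip hb hφb) u₁ u₂
  rw [Fintype.card_fin] at hmean
  have hS : 0 ≤ (N : ℝ)⁻¹ * ∑ i, min (dist (u₁ i) (u₂ i)) 1 := by positivity
  have hK : 0 ≤ K := by positivity
  nlinarith [mul_nonneg hK hD₀, mul_nonneg (by positivity : 0 ≤ c ^ 2 * b) hS]
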